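/- For every t = 1,…,T, the cost-to-go function 𝒬_{t+1} is Lipschitz continuous on 𝒳_t, i.e., there exists L ≥ 0 such that |𝒬_{t+1}(y) − 𝒬_{t+1}(y′)| ≤ L‖y − y′‖ for all y, y′ ∈ 𝒳_t. -/

import Mathlib

open Matrix Set

noncomputable section

/-- Convexity of an extended-real-valued function, via convexity of its epigraph. -/
def ERealConvex {E : Type*} [AddCommGroup E] [Module ℝ E] (φ : E → EReal) : Prop :=
  Convex ℝ {pz : E × ℝ | φ pz.1 ≤ (pz.2 : EReal)}

/-- A proper extended-real-valued function: never −∞ and not identically +∞. -/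
def ERealProper {E : Type*} (φ : E → EReal) : Prop :=
  (∀ x, φ x ≠ ⊥) ∧ (∃ x, φ x ≠ ⊤)

/-!
Backward induction on `t`. Suppose `𝒬_{t+2}` is finite, convex and Lipschitz on `𝒳_{t+1}`. Then
`𝒬_{t+1}` is the marginal function `y ↦ inf_x Φ (x, y)` of the jointly convex function
`Φ = f_{t+1} + 𝒬_{t+2} + (indicator of the feasible graph)`, so it is convex wherever it is finite.
It is finite on an open convex neighbourhood `U` of `𝒳_t`: from above because, by (H1) and
`𝒳_{t+1} × 𝒳_t ⊆ int (dom f_{t+1})`, every `y` near `𝒳_t` has a feasible `x` with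
`f_{t+1} (x, y) < ∞`; from below because `f_{t+1} (·, y)` is lower semicontinuous and `𝒬_{t+2}` is
continuous on the compact set `𝒳_{t+1}`. A finite convex function on an open subset of `ℝⁿ` is
locally Lipschitz, hence Lipschitz on the compact set `𝒳_t`.
-/

open Metric

variable {E F : Type*}

def costToGo (φ : E × F → EReal) (C : Set (E × F)) (q : E → ℝ) (y : F) : EReal :=
  sInf ((fun x => φ (x, y) + q x) '' {x | (x, y) ∈ C})

theorem costToGo_eq_iInf (φ : E × F → EReal) (C : Set (E × F)) (q : E → ℝ) (y : F) :
    costToGo φ C q y = ⨅ x, ⨅ (_ : (x, y) ∈ C), φ (x, y) + q (x, y).1 :=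
  sInf_image

theorem costToGo_toReal_eq {φ : E × F → EReal} {C : Set (E × F)} {S : Set E} {W : E → EReal}
    (hW_bot : ∀ x ∈ S, W x ≠ ⊥) (hW_top : ∀ x ∈ S, W x ≠ ⊤) (hCS : ∀ z ∈ C, z.1 ∈ S) (y : F) :
    costToGo φ C (fun x => (W x).toReal) y = sInf ((fun x => φ (x, y) + W x) '' {x | (x, y) ∈ C}) :=
  congrArg sInf <| image_congr fun x hx => by
    rw [EReal.coe_toReal (hW_top x (hCS _ hx)) (hW_bot x (hCS _ hx))]

theorem costToGo_ne_top {φ : E × F → EReal} {C : Set (E × F)} (q : E → ℝ) {x : E} {y : F}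
    (hxy : (x, y) ∈ C) (hφ : φ (x, y) ≠ ⊤) : costToGo φ C q y ≠ ⊤ :=
  ne_top_of_le_ne_top (EReal.add_lt_top hφ (EReal.coe_ne_top _)).ne (sInf_le ⟨x, hxy, rfl⟩)

section Convexity

variable [AddCommGroup E] [Module ℝ E] [AddCommGroup F] [Module ℝ F]

theorem ERealConvex.convex_setOf_le {φ : E → EReal} (hφ : ERealConvex φ) (c : ℝ) :
    Convex ℝ {x | φ x ≤ c} := by
  intro x hx x' hx' a b ha hb hab
  have h := hφ (x := (x, c)) (y := (x', c)) hx hx' ha hb hab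
  simpa only [mem_ofPred_eq, Prod.smul_mk, Prod.mk_add_mk, Convex.combo_self hab] using h

theorem ERealConvex.iInf_mem_add {φ : E × F → EReal} (hφ : ERealConvex φ) {C : Set (E × F)}
    (hC : Convex ℝ C) {S : Set E} {q : E → ℝ} (hq : ConvexOn ℝ S q) (hCS : ∀ z ∈ C, z.1 ∈ S) :
    ERealConvex fun z : E × F => ⨅ (_ : z ∈ C), φ z + q z.1 := by
  have mem_of_le : ∀ {z : E × F} {s : ℝ}, ⨅ (_ : z ∈ C), φ z + q z.1 ≤ (s : EReal) →
      z ∈ C ∧ φ z ≤ ((s - q z.1 : ℝ) : EReal) := by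
    intro z s h
    by_cases hz : z ∈ C
    · rw [iInf_pos hz] at h
      rw [EReal.coe_sub, EReal.le_sub_iff_add_le (by simp) (by simp)]
      exact ⟨hz, h⟩
    · rw [iInf_neg hz, top_le_iff] at h
      exact absurd h (EReal.coe_ne_top s)
  rintro ⟨z, s⟩ hzs ⟨z', s'⟩ hzs' a b ha hb hab
  obtain ⟨hz, hφz⟩ := mem_of_le hzs
  obtain ⟨hz', hφz'⟩ := mem_of_le hzs'
  have hφc := hφ (x := (z, s - q z.1)) (y := (z', s' - q z'.1)) hφz hφz' ha hb hab
  have hqc := hq.2 (hCS z hz) (hCS z' hz') ha hb hab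
  simp only [mem_ofPred_eq, Prod.smul_mk, Prod.mk_add_mk, smul_eq_mul, Prod.fst_add] at hφc hqc ⊢
  rw [iInf_pos (hC hz hz' ha hb hab)]
  calc φ (a • z + b • z') + q (a • z.1 + b • z'.1)
      ≤ ((a * (s - q z.1) + b * (s' - q z'.1) : ℝ) : EReal) + ((a * q z.1 + b * q z'.1 : ℝ)) :=
        add_le_add hφc (EReal.coe_le_coe_iff.2 hqc)
    _ = ((a * s + b * s' : ℝ) : EReal) := by rw [← EReal.coe_add]; ring_nf

theorem ERealConvex.convexOn_toReal_iInf {Φ : E × F → EReal} (hΦ : ERealConvex Φ) {U : Set F}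
    (hU : Convex ℝ U) (hfin : ∀ y ∈ U, ⨅ x, Φ (x, y) ≠ ⊥ ∧ ⨅ x, Φ (x, y) ≠ ⊤) :
    ConvexOn ℝ U fun y => (⨅ x, Φ (x, y)).toReal := by
  refine ⟨hU, fun y hy y' hy' a b ha hb hab => ?_⟩
  have above : ∀ s s' : ℝ, ⨅ x, Φ (x, y) < s → ⨅ x, Φ (x, y') < s' →
      ⨅ x, Φ (x, a • y + b • y') ≤ ((a * s + b * s' : ℝ) : EReal) := by
    intro s s' hs hs'
    obtain ⟨x, hx⟩ := iInf_lt_iff.1 hs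
    obtain ⟨x', hx'⟩ := iInf_lt_iff.1 hs'
    have h := hΦ (x := ((x, y), s)) (y := ((x', y'), s')) hx.le hx'.le ha hb hab
    simp only [mem_ofPred_eq, Prod.smul_mk, Prod.mk_add_mk, smul_eq_mul] at h
    exact (iInf_le _ _).trans h
  set V := fun y => ⨅ x, Φ (x, y)
  refine le_of_forall_pos_le_add fun ε hε => ?_
  have lt_toReal_add : ∀ y ∈ U, V y < ((V y).toReal + ε : ℝ) := fun y hy =>
    calc V y = ((V y).toReal : EReal) := (EReal.coe_toReal (hfin y hy).2 (hfin y hy).1).symm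
      _ < _ := EReal.coe_lt_coe_iff.2 (lt_add_of_pos_right _ hε)
  have h := above _ _ (lt_toReal_add y hy) (lt_toReal_add y' hy')
  have h' := EReal.toReal_le_toReal h (hfin _ (hU hy hy' ha hb hab)).1 (EReal.coe_ne_top _)
  rw [EReal.toReal_coe] at h'
  calc (V (a • y + b • y')).toReal ≤ a * ((V y).toReal + ε) + b * ((V y').toReal + ε) := h'
    _ = a • (V y).toReal + b • (V y').toReal + ε := by
      simp only [smul_eq_mul]; linear_combination ε * hab

theorem convexOn_toReal_costToGo {φ : E × F → EReal} (hφ : ERealConvex φ) {C : Set (E × F)}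
    (hC : Convex ℝ C) {S : Set E} {q : E → ℝ} (hq : ConvexOn ℝ S q) (hCS : ∀ z ∈ C, z.1 ∈ S)
    {U : Set F} (hU : Convex ℝ U)
    (hfin : ∀ y ∈ U, costToGo φ C q y ≠ ⊥ ∧ costToGo φ C q y ≠ ⊤) :
    ConvexOn ℝ U fun y => (costToGo φ C q y).toReal := by
  simp only [costToGo_eq_iInf] at hfin ⊢
  exact (hφ.iInf_mem_add hC hq hCS).convexOn_toReal_iInf hU hfin

end Convexity

theorem LowerSemicontinuousOn.exists_forall_coe_le {α : Type*} [TopologicalSpace α]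
    {φ : α → EReal} {s : Set α} (hφ : LowerSemicontinuousOn φ s) (hs : IsCompact s)
    (hbot : ∀ x ∈ s, φ x ≠ ⊥) : ∃ c : ℝ, ∀ x ∈ s, (c : EReal) ≤ φ x := by
  rcases s.eq_empty_or_nonempty with rfl | hne
  · exact ⟨0, by simp⟩
  obtain ⟨a, ha, hmin⟩ := hφ.exists_isMinOn hne hs
  exact ⟨(φ a).toReal, fun x hx => (EReal.coe_toReal_le (hbot a ha)).trans (hmin hx)⟩

theorem costToGo_ne_bot [TopologicalSpace E] [TopologicalSpace F]
    {S : Set E} (hS : IsCompact S) {φ : E × F → EReal}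
    (hφ : LowerSemicontinuous φ) (hφ_bot : ∀ z, φ z ≠ ⊥) {C : Set (E × F)}
    (hCS : ∀ z ∈ C, z.1 ∈ S) {q : E → ℝ} (hq : ContinuousOn q S) (y : F) :
    costToGo φ C q y ≠ ⊥ := by
  have hφy : LowerSemicontinuousOn (fun x => φ (x, y)) S :=
    (hφ.comp (continuous_id.prodMk continuous_const)).lowerSemicontinuousOn S
  obtain ⟨c, hc⟩ := hφy.exists_forall_coe_le hS fun x _ => hφ_bot _
  obtain ⟨c', hc'⟩ := hS.bddBelow_image hq
  refine ne_bot_of_le_ne_bot (EReal.coe_ne_bot (c + c')) (le_sInf ?_)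
  rintro _ ⟨x, hx, rfl⟩
  have hxS := hCS _ hx
  rw [EReal.coe_add]
  exact add_le_add (hc x hxS) (EReal.coe_le_coe_iff.2 (hc' ⟨x, hxS, rfl⟩))

section Lipschitz

variable [NormedAddCommGroup F] [NormedSpace ℝ F]

structure IsFiniteConvexLipschitzOn (V : F → EReal) (K : Set F) : Prop where
  ne_bot : ∀ y ∈ K, V y ≠ ⊥
  ne_top : ∀ y ∈ K, V y ≠ ⊤
  convexOn : ConvexOn ℝ K fun y => (V y).toReal
  exists_lipschitzOnWith : ∃ L, LipschitzOnWith L (fun y => (V y).toReal) K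

theorem IsFiniteConvexLipschitzOn.continuousOn {V : F → EReal} {K : Set F}
    (hV : IsFiniteConvexLipschitzOn V K) : ContinuousOn (fun y => (V y).toReal) K :=
  hV.exists_lipschitzOnWith.choose_spec.continuousOn

theorem isFiniteConvexLipschitzOn_const {K : Set F} (hK : Convex ℝ K) (c : ℝ) :
    IsFiniteConvexLipschitzOn (fun _ => (c : EReal)) K where
  ne_bot _ _ := EReal.coe_ne_bot c
  ne_top _ _ := EReal.coe_ne_top c
  convexOn := convexOn_const _ hK
  exists_lipschitzOnWith := ⟨0, (LipschitzWith.const _).lipschitzOnWith⟩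

theorem IsCompact.exists_isOpen_convex_between {K V : Set F} (hK : IsCompact K)
    (hKc : Convex ℝ K) (hV : IsOpen V) (hKV : K ⊆ V) :
    ∃ U, IsOpen U ∧ Convex ℝ U ∧ K ⊆ U ∧ U ⊆ V := by
  obtain ⟨δ, hδ, hδV⟩ := hK.exists_thickening_subset_open hV hKV
  exact ⟨thickening δ K, isOpen_thickening, hKc.thickening δ, self_subset_thickening hδ K, hδV⟩

theorem isFiniteConvexLipschitzOn_costToGo [TopologicalSpace E] [AddCommGroup E] [Module ℝ E]
    [FiniteDimensional ℝ F] {S : Set E} {K : Set F}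
    (hS : IsCompact S) (hK : IsCompact K) (hKc : Convex ℝ K) {φ : E × F → EReal}
    (hφ_lsc : LowerSemicontinuous φ) (hφ_bot : ∀ z, φ z ≠ ⊥) (hφ : ERealConvex φ)
    (hφ_dom : S ×ˢ K ⊆ interior {z | φ z ≠ ⊤}) {C : Set (E × F)} (hC : Convex ℝ C)
    (hCS : ∀ z ∈ C, z.1 ∈ S) (hKC : K ⊆ interior {y | ∃ x, (x, y) ∈ C}) {q : E → ℝ}
    (hq : ConvexOn ℝ S q) (hq_cont : ContinuousOn q S) :
    IsFiniteConvexLipschitzOn (costToGo φ C q) K := by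
  obtain ⟨u, v, -, hv, hSu, hKv, huv⟩ := generalized_tube_lemma hS hK isOpen_interior hφ_dom
  obtain ⟨U, hUo, hUc, hKU, hUsub⟩ :=
    hK.exists_isOpen_convex_between hKc (isOpen_interior.inter hv) (subset_inter hKC hKv)
  have hfin : ∀ y ∈ U, costToGo φ C q y ≠ ⊥ ∧ costToGo φ C q y ≠ ⊤ := by
    intro y hy
    obtain ⟨x, hxy⟩ := interior_subset (hUsub hy).1
    have hφxy : φ (x, y) ≠ ⊤ := interior_subset (huv ⟨hSu (hCS _ hxy), (hUsub hy).2⟩)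
    exact ⟨costToGo_ne_bot hS hφ_lsc hφ_bot hCS hq_cont y, costToGo_ne_top q hxy hφxy⟩
  have hconv := convexOn_toReal_costToGo hφ hC hq hCS hUc hfin
  exact
    { ne_bot := fun y hy => (hfin y (hKU hy)).1
      ne_top := fun y hy => (hfin y (hKU hy)).2
      convexOn := hconv.subset hKU hKc
      exists_lipschitzOnWith :=
        ((hconv.locallyLipschitzOn hUo).mono hKU).exists_lipschitzOnWith_of_compact hK }

end Lipschitz

theorem convex_setOf_mulVec_add_mulVec_eq {n q : ℕ} (A B : Matrix (Fin q) (Fin n) ℝ)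
    (c : Fin q → ℝ) :
    Convex ℝ {z : EuclideanSpace ℝ (Fin n) × EuclideanSpace ℝ (Fin n) |
      A *ᵥ z.1 + B *ᵥ z.2 = c} := by
  intro z hz z' hz' a b ha hb hab
  simp only [mem_ofPred_eq, Prod.fst_add, Prod.snd_add, Prod.smul_fst, Prod.smul_snd,
    WithLp.ofLp_add, WithLp.ofLp_smul, mulVec_add, mulVec_smul] at hz hz' ⊢
  calc a • A *ᵥ z.1 + b • A *ᵥ z'.1 + (a • B *ᵥ z.2 + b • B *ᵥ z'.2)
      = a • (A *ᵥ z.1 + B *ᵥ z.2) + b • (A *ᵥ z'.1 + B *ᵥ z'.2) := by module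
    _ = c := by rw [hz, hz', Convex.combo_self hab]

theorem convex_setOf_feasible {n p q : ℕ} {S : Set (EuclideanSpace ℝ (Fin n))} (hS : Convex ℝ S)
    {g : Fin p → EuclideanSpace ℝ (Fin n) → EuclideanSpace ℝ (Fin n) → EReal}
    (hg : ∀ i, ERealConvex
      fun z : EuclideanSpace ℝ (Fin n) × EuclideanSpace ℝ (Fin n) => g i z.1 z.2)
    (A B : Matrix (Fin q) (Fin n) ℝ) (c : Fin q → ℝ) :
    Convex ℝ {z : EuclideanSpace ℝ (Fin n) × EuclideanSpace ℝ (Fin n) |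
      z.1 ∈ S ∧ (∀ i, g i z.1 z.2 ≤ 0) ∧ A *ᵥ z.1 + B *ᵥ z.2 = c} := by
  have hg_le : Convex ℝ {z : EuclideanSpace ℝ (Fin n) × EuclideanSpace ℝ (Fin n) |
      ∀ i, g i z.1 z.2 ≤ 0} := by
    simpa only [ofPred_forall, EReal.coe_zero] using
      convex_iInter fun i => (hg i).convex_setOf_le 0
  exact (hS.linear_preimage (LinearMap.fst ℝ _ _)).inter
    (hg_le.inter (convex_setOf_mulVec_add_mulVec_eq A B c))

theorem stmt_1_general
    (n p q T : ℕ)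
    (𝒳 : ℕ → Set (EuclideanSpace ℝ (Fin n)))
    (h𝒳 : ∀ t, 1 ≤ t → t ≤ T → (𝒳 t).Nonempty ∧ Convex ℝ (𝒳 t) ∧ IsCompact (𝒳 t))
    (f : ℕ → EuclideanSpace ℝ (Fin n) → EuclideanSpace ℝ (Fin n) → EReal)
    (hf : ∀ t, 1 ≤ t → t ≤ T →
      ERealProper (fun z : EuclideanSpace ℝ (Fin n) × EuclideanSpace ℝ (Fin n) => f t z.1 z.2) ∧
      LowerSemicontinuous
        (fun z : EuclideanSpace ℝ (Fin n) × EuclideanSpace ℝ (Fin n) => f t z.1 z.2) ∧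
      ERealConvex
        (fun z : EuclideanSpace ℝ (Fin n) × EuclideanSpace ℝ (Fin n) => f t z.1 z.2) ∧
      (𝒳 t ×ˢ 𝒳 (t - 1)) ⊆ interior {z : EuclideanSpace ℝ (Fin n) × EuclideanSpace ℝ (Fin n) |
        f t z.1 z.2 ≠ ⊤})
    (g : ℕ → Fin p → EuclideanSpace ℝ (Fin n) → EuclideanSpace ℝ (Fin n) → EReal)
    (hg : ∀ t, 1 ≤ t → t ≤ T → ∀ i,
      ERealProper (fun z : EuclideanSpace ℝ (Fin n) × EuclideanSpace ℝ (Fin n) => g t i z.1 z.2) ∧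
      LowerSemicontinuous
        (fun z : EuclideanSpace ℝ (Fin n) × EuclideanSpace ℝ (Fin n) => g t i z.1 z.2) ∧
      ERealConvex
        (fun z : EuclideanSpace ℝ (Fin n) × EuclideanSpace ℝ (Fin n) => g t i z.1 z.2) ∧
      (𝒳 t ×ˢ 𝒳 (t - 1)) ⊆ interior {z : EuclideanSpace ℝ (Fin n) × EuclideanSpace ℝ (Fin n) |
        g t i z.1 z.2 ≠ ⊤})
    (A B : ℕ → Matrix (Fin q) (Fin n) ℝ) (b : ℕ → Fin q → ℝ)
    (X : ℕ → EuclideanSpace ℝ (Fin n) → Set (EuclideanSpace ℝ (Fin n)))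
    (hX : ∀ t y, X t y =
      {x ∈ 𝒳 t | (∀ i, g t i x y ≤ 0) ∧ (A t).mulVec x + (B t).mulVec y = b t})
    -- Assumption (H1)
    (hH1b : ∀ t, 2 ≤ t → t ≤ T →
      𝒳 (t - 1) ⊆ interior {y | (X t y ∩ intrinsicInterior ℝ (𝒳 t)).Nonempty})
    -- the cost-to-go functions
    (Q : ℕ → EuclideanSpace ℝ (Fin n) → EReal)
    (hQT : ∀ y, Q (T + 1) y = 0)
    (hQ : ∀ t, 1 ≤ t → t ≤ T → ∀ y,
      Q t y = sInf ((fun x => f t x y + Q (t + 1) x) '' X t y)) :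
    ∀ t, 1 ≤ t → t ≤ T →
      (∀ y ∈ 𝒳 t, Q (t + 1) y ≠ ⊥ ∧ Q (t + 1) y ≠ ⊤) ∧
      ∃ L : ℝ, 0 ≤ L ∧ ∀ y ∈ 𝒳 t, ∀ y' ∈ 𝒳 t,
        |(Q (t + 1) y).toReal - (Q (t + 1) y').toReal| ≤ L * ‖y - y'‖ := by
  have stage : ∀ t, 1 ≤ t → t ≤ T → IsFiniteConvexLipschitzOn (Q (t + 1)) (𝒳 t) := by
    intro t ht htT
    refine Nat.decreasingInduction' (P := fun k => IsFiniteConvexLipschitzOn (Q (k + 1)) (𝒳 k))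
      (fun k hkT htk hnext => ?_) htT ?_
    · obtain ⟨-, hSc, hS⟩ := h𝒳 (k + 1) (by omega) hkT
      obtain ⟨-, hKc, hK⟩ := h𝒳 k (by omega) hkT.le
      obtain ⟨⟨hf_bot, -⟩, hf_lsc, hf_conv, hf_dom⟩ := hf (k + 1) (by omega) hkT
      have hH1 := hH1b (k + 1) (by omega) hkT
      simp only [Nat.add_sub_cancel] at hf_dom hH1
      have hXS : ∀ z : EuclideanSpace ℝ (Fin n) × EuclideanSpace ℝ (Fin n),
          z.1 ∈ X (k + 1) z.2 → z.1 ∈ 𝒳 (k + 1) := fun z hz => by rw [hX] at hz; exact hz.1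
      have hQ_eq : Q (k + 1) = costToGo (fun z => f (k + 1) z.1 z.2) {z | z.1 ∈ X (k + 1) z.2}
          (fun x => (Q (k + 2) x).toReal) :=
        funext fun y => (hQ (k + 1) (by omega) hkT y).trans
          (costToGo_toReal_eq (φ := fun z => f (k + 1) z.1 z.2) hnext.ne_bot hnext.ne_top
            hXS y).symm
      rw [hQ_eq]
      refine isFiniteConvexLipschitzOn_costToGo hS hK hKc hf_lsc hf_bot hf_conv hf_dom ?_ hXS
        (hH1.trans (interior_mono fun y ⟨x, hx, _⟩ => ⟨x, hx⟩)) hnext.convexOn hnext.continuousOn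
      simp only [hX]
      exact convex_setOf_feasible hSc (fun i => (hg (k + 1) (by omega) hkT i).2.2.1) _ _ _
    · have hQ0 : Q (T + 1) = fun _ => ((0 : ℝ) : EReal) := funext fun y => by simp [hQT]
      rw [hQ0]
      exact isFiniteConvexLipschitzOn_const (h𝒳 T (ht.trans htT) le_rfl).2.1 0
  intro t ht htT
  have h := stage t ht htT
  obtain ⟨L, hL⟩ := h.exists_lipschitzOnWith
  refine ⟨fun y hy => ⟨h.ne_bot y hy, h.ne_top y hy⟩, L, L.2, fun y hy y' hy' => ?_⟩
  simpa [Real.dist_eq, dist_eq_norm] using hL.dist_le_mul y hy y' hy'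

/-- under (H1), each cost-to-go function `𝒬_{t+1}` is (finite and) Lipschitz
continuous on `𝒳_t`. -/
theorem stmt_1
    (n p q T : ℕ) (hn : 1 ≤ n) (hp : 1 ≤ p) (hq : 1 ≤ q) (hT : 1 ≤ T)
    (x₀ : EuclideanSpace ℝ (Fin n))
    (𝒳 : ℕ → Set (EuclideanSpace ℝ (Fin n)))
    (h𝒳₀ : 𝒳 0 = {x₀})
    (h𝒳 : ∀ t, 1 ≤ t → t ≤ T → (𝒳 t).Nonempty ∧ Convex ℝ (𝒳 t) ∧ IsCompact (𝒳 t))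
    (f : ℕ → EuclideanSpace ℝ (Fin n) → EuclideanSpace ℝ (Fin n) → EReal)
    (hf : ∀ t, 1 ≤ t → t ≤ T →
      ERealProper (fun z : EuclideanSpace ℝ (Fin n) × EuclideanSpace ℝ (Fin n) => f t z.1 z.2) ∧
      LowerSemicontinuous
        (fun z : EuclideanSpace ℝ (Fin n) × EuclideanSpace ℝ (Fin n) => f t z.1 z.2) ∧
      ERealConvex
        (fun z : EuclideanSpace ℝ (Fin n) × EuclideanSpace ℝ (Fin n) => f t z.1 z.2) ∧
      (𝒳 t ×ˢ 𝒳 (t - 1)) ⊆ interior {z : EuclideanSpace ℝ (Fin n) × EuclideanSpace ℝ (Fin n) |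
        f t z.1 z.2 ≠ ⊤})
    (g : ℕ → Fin p → EuclideanSpace ℝ (Fin n) → EuclideanSpace ℝ (Fin n) → EReal)
    (hg : ∀ t, 1 ≤ t → t ≤ T → ∀ i,
      ERealProper (fun z : EuclideanSpace ℝ (Fin n) × EuclideanSpace ℝ (Fin n) => g t i z.1 z.2) ∧
      LowerSemicontinuous
        (fun z : EuclideanSpace ℝ (Fin n) × EuclideanSpace ℝ (Fin n) => g t i z.1 z.2) ∧
      ERealConvex
        (fun z : EuclideanSpace ℝ (Fin n) × EuclideanSpace ℝ (Fin n) => g t i z.1 z.2) ∧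
      (𝒳 t ×ˢ 𝒳 (t - 1)) ⊆ interior {z : EuclideanSpace ℝ (Fin n) × EuclideanSpace ℝ (Fin n) |
        g t i z.1 z.2 ≠ ⊤})
    (A B : ℕ → Matrix (Fin q) (Fin n) ℝ) (b : ℕ → Fin q → ℝ)
    (X : ℕ → EuclideanSpace ℝ (Fin n) → Set (EuclideanSpace ℝ (Fin n)))
    (hX : ∀ t y, X t y =
      {x ∈ 𝒳 t | (∀ i, g t i x y ≤ 0) ∧ (A t).mulVec x + (B t).mulVec y = b t})
    -- Assumption (H1)
    (hH1a : (X 1 x₀).Nonempty)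
    (hH1b : ∀ t, 2 ≤ t → t ≤ T →
      𝒳 (t - 1) ⊆ interior {y | (X t y ∩ intrinsicInterior ℝ (𝒳 t)).Nonempty})
    -- the cost-to-go functions
    (Q : ℕ → EuclideanSpace ℝ (Fin n) → EReal)
    (hQT : ∀ y, Q (T + 1) y = 0)
    (hQ : ∀ t, 1 ≤ t → t ≤ T → ∀ y,
      Q t y = sInf ((fun x => f t x y + Q (t + 1) x) '' X t y)) :
    ∀ t, 1 ≤ t → t ≤ T →
      (∀ y ∈ 𝒳 t, Q (t + 1) y ≠ ⊥ ∧ Q (t + 1) y ≠ ⊤) ∧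
      ∃ L : ℝ, 0 ≤ L ∧ ∀ y ∈ 𝒳 t, ∀ y' ∈ 𝒳 t,
        |(Q (t + 1) y).toReal - (Q (t + 1) y').toReal| ≤ L * ‖y - y'‖ :=
  stmt_1_general n p q T 𝒳 h𝒳 f hf g hg A B b X hX hH1b Q hQT hQ
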